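/- arXiv:2105.14229 — 2 statements merged into one kernel-verified Lean document; each statement's English description precedes it below -/
import Mathlib

section
/- Let x, x̂ ∈ R^n with ‖x̂‖₁ - α‖x̂‖₂ ≤ ‖x‖₁ - α‖x‖₂ for some 0 < α ≤ 1, and set h = x̂ - x. Then ‖h_{-max(s)}‖₁ ≤ ‖h_{max(s)}‖₁ + 2‖x_{-max(s)}‖₁ + α‖h‖₂, where h_{max(s)} keeps the s largest-magnitude entries of h (zeroing the rest) and h_{-max(s)} = h - h_{max(s)}. -/
open Finset

noncomputable def l1 {n : ℕ} (x : Fin n → ℝ) : ℝ := ∑ i, |x i|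
noncomputable def l2 {n : ℕ} (x : Fin n → ℝ) : ℝ := Real.sqrt (∑ i, (x i) ^ 2)
noncomputable def linf {n : ℕ} (x : Fin n → ℝ) : ℝ := ‖x‖

/-- `restrict T x` is the vector equal to `x` on `T` and `0` elsewhere. -/
def restrict {n : ℕ} (T : Finset (Fin n)) (x : Fin n → ℝ) : Fin n → ℝ :=
  fun i => if i ∈ T then x i else 0

/-- `T` indexes `s` largest-in-absolute-value entries of `h`. -/
def IsMaxS {n : ℕ} (s : ℕ) (h : Fin n → ℝ) (T : Finset (Fin n)) : Prop :=
  T.card = s ∧ ∀ i ∈ T, ∀ j ∉ T, |h j| ≤ |h i|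

/-- number of nonzero entries. -/
noncomputable def l0 {n : ℕ} (x : Fin n → ℝ) : ℕ := (Finset.univ.filter fun i => x i ≠ 0).card


/-!
Off any index set `T`, `|x̂ᵢ| ≥ |hᵢ| - |xᵢ|`, and on it `|x̂ᵢ| ≥ |xᵢ| - |hᵢ|`; summing and feeding in
the hypothesis together with `‖x̂‖₂ - ‖x‖₂ ≤ ‖h‖₂` gives the cone inequality
`‖h_{Tᶜ}‖₁ ≤ ‖h_T‖₁ + 2‖x_{Tᶜ}‖₁ + α‖h‖₂` for every `T`. Taking `T = Tx` and then passing to the index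
set `Th` of the `s` largest entries of `h` only improves both sides, since `Th` carries the largest
`ℓ₁` mass of `h` among sets of size `s`.
-/

lemma l1_restrict {n : ℕ} (T : Finset (Fin n)) (v : Fin n → ℝ) :
    l1 (_root_.restrict T v) = ∑ i ∈ T, |v i| := by
  simp [l1, _root_.restrict, apply_ite abs]

lemma l1_eq_sum_add_sum_compl {n : ℕ} (T : Finset (Fin n)) (v : Fin n → ℝ) :
    l1 v = ∑ i ∈ T, |v i| + ∑ i ∈ Tᶜ, |v i| :=
  (Finset.sum_add_sum_compl T _).symm

lemma l2_eq_norm {n : ℕ} (v : Fin n → ℝ) : l2 v = ‖WithLp.toLp 2 v‖ := by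
  simp [l2, EuclideanSpace.norm_eq]

lemma l2_sub_l2_le {n : ℕ} (a b : Fin n → ℝ) : l2 a - l2 b ≤ l2 (a - b) := by
  simpa only [l2_eq_norm, WithLp.toLp_sub] using
    norm_sub_norm_le (WithLp.toLp 2 a) (WithLp.toLp 2 b)

lemma Finset.sum_le_sum_of_card_eq_of_forall_le {ι M : Type*} [AddCommMonoid M] [LinearOrder M]
    [IsOrderedAddMonoid M] {A B : Finset ι} {f : ι → M} (hcard : A.card = B.card)
    (hle : ∀ a ∈ A, ∀ b ∈ B, f a ≤ f b) :
    ∑ a ∈ A, f a ≤ ∑ b ∈ B, f b := by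
  rcases B.eq_empty_or_nonempty with rfl | hB
  · simp [Finset.card_eq_zero.mp hcard]
  obtain ⟨b₀, hb₀, hmin⟩ := B.exists_min_image f hB
  calc ∑ a ∈ A, f a ≤ A.card • f b₀ := Finset.sum_le_card_nsmul _ _ _ fun a ha => hle a ha b₀ hb₀
    _ = B.card • f b₀ := by rw [hcard]
    _ ≤ ∑ b ∈ B, f b := Finset.card_nsmul_le_sum _ _ _ hmin

lemma IsMaxS.sum_abs_le {n s : ℕ} {h : Fin n → ℝ} {Th T : Finset (Fin n)} (hTh : IsMaxS s h Th)
    (hT : T.card = s) :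
    ∑ i ∈ T, |h i| ≤ ∑ i ∈ Th, |h i| := by
  have hdiff : ∑ i ∈ T \ Th, |h i| ≤ ∑ i ∈ Th \ T, |h i| :=
    Finset.sum_le_sum_of_card_eq_of_forall_le (Finset.card_sdiff_comm (hT.trans hTh.1.symm))
      fun j hj i hi => hTh.2 i (Finset.mem_sdiff.mp hi).1 j (Finset.mem_sdiff.mp hj).2
  rw [← Finset.sum_inter_add_sum_sdiff T Th, ← Finset.sum_inter_add_sum_sdiff Th T,
    Finset.inter_comm]
  exact add_le_add le_rfl hdiff

lemma IsMaxS.sum_abs_compl_le {n s : ℕ} {h : Fin n → ℝ} {Th T : Finset (Fin n)}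
    (hTh : IsMaxS s h Th) (hT : T.card = s) :
    ∑ i ∈ Thᶜ, |h i| ≤ ∑ i ∈ Tᶜ, |h i| := by
  linarith [hTh.sum_abs_le hT, l1_eq_sum_add_sum_compl Th h, l1_eq_sum_add_sum_compl T h]

lemma sum_abs_sub_add_sum_compl_le_l1 {n : ℕ} (T : Finset (Fin n)) (x xhat : Fin n → ℝ) :
    ∑ i ∈ T, (|x i| - |(xhat - x) i|) + ∑ i ∈ Tᶜ, (|(xhat - x) i| - |x i|) ≤ l1 xhat := by
  rw [l1_eq_sum_add_sum_compl T]
  gcongr with i _ i _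
  · rw [Pi.sub_apply, abs_sub_comm]
    linarith [abs_sub_abs_le_abs_sub (x i) (xhat i)]
  · simpa using abs_sub (xhat i) (x i)

lemma sum_abs_compl_le_of_l1_sub_l2_le {n : ℕ} (x xhat : Fin n → ℝ) {α : ℝ} (hα : 0 ≤ α)
    (hmin : l1 xhat - α * l2 xhat ≤ l1 x - α * l2 x) (T : Finset (Fin n)) :
    ∑ i ∈ Tᶜ, |(xhat - x) i| ≤
      ∑ i ∈ T, |(xhat - x) i| + 2 * ∑ i ∈ Tᶜ, |x i| + α * l2 (xhat - x) := by
  have hl1 := sum_abs_sub_add_sum_compl_le_l1 T x xhat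
  rw [Finset.sum_sub_distrib, Finset.sum_sub_distrib] at hl1
  have hl2 := mul_le_mul_of_nonneg_left (l2_sub_l2_le xhat x) hα
  linarith [l1_eq_sum_add_sum_compl T x]

theorem stmt3_general {n s : ℕ} (x xhat : Fin n → ℝ) (α : ℝ) (hα0 : 0 < α)
    (hmin : l1 xhat - α * l2 xhat ≤ l1 x - α * l2 x)
    (Th : Finset (Fin n)) (hTh : IsMaxS s (xhat - x) Th)
    (Tx : Finset (Fin n)) (hTx : IsMaxS s x Tx) :
    l1 (restrict Thᶜ (xhat - x)) ≤
      l1 (restrict Th (xhat - x)) + 2 * l1 (restrict Txᶜ x) + α * l2 (xhat - x) := by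
  rw [l1_restrict, l1_restrict, l1_restrict]
  have hcone := sum_abs_compl_le_of_l1_sub_l2_le x xhat hα0.le hmin Tx
  linarith [hTh.sum_abs_le hTx.1, hTh.sum_abs_compl_le hTx.1]

theorem stmt3 {n s : ℕ} (x xhat : Fin n → ℝ) (α : ℝ) (hα0 : 0 < α) (hα1 : α ≤ 1)
    (hmin : l1 xhat - α * l2 xhat ≤ l1 x - α * l2 x)
    (Th : Finset (Fin n)) (hTh : IsMaxS s (xhat - x) Th)
    (Tx : Finset (Fin n)) (hTx : IsMaxS s x Tx) :
    l1 (restrict Thᶜ (xhat - x)) ≤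
      l1 (restrict Th (xhat - x)) + 2 * l1 (restrict Txᶜ x) + α * l2 (xhat - x) :=
  stmt3_general x xhat α hα0 hmin Th hTh Tx hTx
end

section
/- Let ν ∈ R^n satisfy ‖ν‖_∞ ≤ θ for some θ > 0 and ‖ν‖₁ - ‖ν‖₂ ≤ (s - √s)θ, where s is a positive integer with s ≤ |supp(ν)|. Then ν can be written as a convex combination ν = Σ_{i=1}^N λ_i u^{(i)} of s-sparse vectors u^{(i)} with supp(u^{(i)}) ⊆ supp(ν), ‖u^{(i)}‖_∞ ≤ (1 + √2/2)θ, λ_i ∈ (0,1], Σλ_i = 1, and Σ_{i=1}^N λ_i ‖u^{(i)}‖₂² ≤ [(1 + √2/2)²(s - √s) + 1] θ². -/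
/-!
Since `|ν k| ≤ θ`, we have `‖ν‖₂² ≤ θ ‖ν‖₁`, and `t ↦ t - √(θ t)` is increasing for `t ≥ θ / 4`;
so the hypothesis on `‖ν‖₁ - ‖ν‖₂` forces `‖ν‖₁ ≤ s θ`. A vector `x` with `‖x‖_∞ ≤ θ` and
`‖x‖₁ ≤ s θ` lies in the convex hull of the `s`-sparse vectors supported in `supp x` with entries
bounded by `θ`: if `x` is not `s`-sparse it has two entries with absolute value strictly between
`0` and `θ`, and shifting absolute mass between them, in either direction, until one of them
saturates or vanishes writes `x` as a convex combination of two vectors with fewer such entries.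
Every atom `u` then has `‖u‖₂² ≤ s θ² ≤ ((1 + √2/2)² (s - √s) + 1) θ²`.
-/

open Finset

lemma Convex.mem_of_add_smul_mem_of_sub_smul_mem {E : Type*} [AddCommGroup E] [Module ℝ E]
    {C : Set E} (hC : Convex ℝ C) {x d : E} {t₁ t₂ : ℝ} (ht₁ : 0 < t₁) (ht₂ : 0 < t₂)
    (h₁ : x + t₁ • d ∈ C) (h₂ : x - t₂ • d ∈ C) : x ∈ C := by
  have hsum : t₂ / (t₁ + t₂) + t₁ / (t₁ + t₂) = 1 := by
    rw [← add_div, add_comm, div_self (by positivity)]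
  have hbal : t₂ / (t₁ + t₂) * t₁ = t₁ / (t₁ + t₂) * t₂ := by ring
  convert hC h₁ h₂ (by positivity) (by positivity) hsum using 1
  linear_combination (norm := module) -(hsum • x) - hbal • d

lemma exists_fin_convex_combination_of_mem_convexHull {𝕜 E : Type*} [Field 𝕜] [LinearOrder 𝕜]
    [IsStrictOrderedRing 𝕜] [AddCommGroup E] [Module 𝕜 E] {S : Set E} {x : E}
    (hx : x ∈ convexHull 𝕜 S) :
    ∃ (N : ℕ) (_ : 0 < N) (lam : Fin N → 𝕜) (u : Fin N → E),
      (∀ i, 0 < lam i ∧ lam i ≤ 1) ∧ ∑ i, lam i = 1 ∧ x = ∑ i, lam i • u i ∧ ∀ i, u i ∈ S := by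
  obtain ⟨ι, _, z, w, hzS, -, hw, hw1, hwz⟩ := eq_pos_convex_span_of_mem_convexHull hx
  set e := Fintype.equivFin ι
  have hN : 0 < Fintype.card ι := by
    by_contra! h0
    have : IsEmpty ι := Fintype.card_eq_zero_iff.1 (Nat.le_zero.1 h0)
    simp at hw1
  refine ⟨_, hN, w ∘ e.symm, z ∘ e.symm, fun i => ⟨hw _, ?_⟩, ?_, ?_,
    fun i => hzS ⟨_, rfl⟩⟩
  · rw [← hw1]
    exact Finset.single_le_sum (fun j _ => (hw j).le) (Finset.mem_univ _)
  · rw [← hw1]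
    exact e.symm.sum_comp w
  · rw [← hwz]
    exact (e.symm.sum_comp fun j => w j • z j).symm

lemma abs_add_mul_sign {a : ℝ} (ha : a ≠ 0) {t : ℝ} (ht : 0 ≤ |a| + t) :
    |a + t * SignType.sign a| = |a| + t := by
  rcases ha.lt_or_gt with h | h
  · rw [abs_of_neg h] at ht ⊢
    rw [sign_neg h, SignType.coe_neg_one, abs_of_nonpos (by linarith)]
    ring
  · rw [abs_of_pos h] at ht ⊢
    rw [sign_pos h, SignType.coe_one, abs_of_nonneg (by linarith)]
    ring

lemma l2_sq_le_mul_l1 {n : ℕ} {θ : ℝ} {x : Fin n → ℝ} (hb : ∀ k, |x k| ≤ θ) :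
    l2 x ^ 2 ≤ θ * l1 x := by
  rw [l2, Real.sq_sqrt (by positivity), l1, Finset.mul_sum]
  refine Finset.sum_le_sum fun k _ => ?_
  rw [← sq_abs, sq]
  exact mul_le_mul_of_nonneg_right (hb k) (abs_nonneg _)

lemma l1_le_of_l1_sub_l2_le {n : ℕ} {θ s : ℝ} {x : Fin n → ℝ} (hθ : 0 ≤ θ)
    (hb : ∀ k, |x k| ≤ θ) (hs : 1 / 4 ≤ s) (h : l1 x - l2 x ≤ (s - √s) * θ) :
    l1 x ≤ s * θ := by
  have hl1 : 0 ≤ l1 x := Finset.sum_nonneg fun k _ => abs_nonneg _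
  set P := √(l1 x)
  set r := √θ
  set Q := √s * r
  have hP : P ^ 2 = l1 x := Real.sq_sqrt hl1
  have hQ : Q ^ 2 = s * θ := by rw [mul_pow, Real.sq_sqrt (by linarith), Real.sq_sqrt hθ]
  have hsθ : √s * θ = Q * r := by rw [mul_assoc, Real.mul_self_sqrt hθ]
  have hl2 : l2 x ≤ r * P := by
    calc l2 x = √(l2 x ^ 2) := (Real.sqrt_sq (Real.sqrt_nonneg _)).symm
      _ ≤ √(θ * l1 x) := Real.sqrt_le_sqrt (l2_sq_le_mul_l1 hb)
      _ = r * P := Real.sqrt_mul hθ _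
  have hPQ : P ^ 2 - r * P ≤ Q ^ 2 - Q * r := by
    rw [hP, hQ, ← hsθ]; linarith
  have hhalf : 1 / 2 ≤ √s := (Real.le_sqrt' (by norm_num)).2 (by linarith)
  -- `t ↦ t ^ 2 - r * t` is increasing for `t ≥ r / 2`, and `Q ≥ r / 2`
  have hPQ' : P ≤ Q := by
    by_contra! hlt
    have hr : 0 ≤ r := Real.sqrt_nonneg _
    have : r ≤ 2 * Q := by nlinarith
    nlinarith
  rw [← hP, ← hQ]
  exact pow_le_pow_left₀ (Real.sqrt_nonneg _) hPQ' 2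

lemma l2_sq_le_of_l0_le {n s : ℕ} {θ : ℝ} {u : Fin n → ℝ} (hl0 : l0 u ≤ s)
    (hb : ∀ k, |u k| ≤ θ) : l2 u ^ 2 ≤ s * θ ^ 2 := by
  have hθ2 : ∀ k, u k ^ 2 ≤ θ ^ 2 := fun k => sq_le_sq' (abs_le.1 (hb k)).1 (abs_le.1 (hb k)).2
  calc l2 u ^ 2 = ∑ k ∈ univ.filter fun k => u k ≠ 0, u k ^ 2 := by
        rw [l2, Real.sq_sqrt (by positivity)]
        refine (Finset.sum_filter_of_ne fun k _ hk => ?_).symm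
        exact fun h0 => hk (by rw [h0, zero_pow two_ne_zero])
    _ ≤ ∑ k ∈ univ.filter fun k => u k ≠ 0, θ ^ 2 := Finset.sum_le_sum fun k _ => hθ2 k
    _ = l0 u * θ ^ 2 := by rw [Finset.sum_const, nsmul_eq_mul, l0]
    _ ≤ s * θ ^ 2 := by gcongr

section Transfer

variable {n : ℕ} {θ : ℝ} {x : Fin n → ℝ} {p q k : Fin n} {t : ℝ}

noncomputable def fracSupport (θ : ℝ) (x : Fin n → ℝ) : Finset (Fin n) :=
  univ.filter fun k => x k ≠ 0 ∧ |x k| < θ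

/-- For `-|x p| ≤ t ≤ |x q|`, `x + t • transferDir x p q` moves absolute mass `t` from entry `q`
to entry `p` without changing any sign. -/
noncomputable def transferDir (x : Fin n → ℝ) (p q : Fin n) : Fin n → ℝ :=
  Pi.single p (SignType.sign (x p) : ℝ) - Pi.single q (SignType.sign (x q) : ℝ)

lemma transferDir_swap : transferDir x q p = -transferDir x p q := by
  simp [transferDir]

lemma add_smul_transferDir_apply_of_ne (hkp : k ≠ p) (hkq : k ≠ q) :
    (x + t • transferDir x p q) k = x k := by
  simp [transferDir, hkp, hkq]

lemma abs_add_smul_transferDir_apply (hpq : p ≠ q) (hp : x p ≠ 0) (hq : x q ≠ 0)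
    (htp : -|x p| ≤ t) (htq : t ≤ |x q|) (k : Fin n) :
    |(x + t • transferDir x p q) k| =
      |x k| + (if k = p then t else 0) - (if k = q then t else 0) := by
  by_cases hkp : k = p
  · subst hkp
    simp only [transferDir, Pi.add_apply, Pi.smul_apply, Pi.sub_apply, Pi.single_eq_same,
      Pi.single_eq_of_ne hpq, smul_eq_mul, if_true, if_neg hpq]
    rw [sub_zero, sub_zero, abs_add_mul_sign hp (by linarith)]
  by_cases hkq : k = q
  · subst hkq
    simp only [transferDir, Pi.add_apply, Pi.smul_apply, Pi.sub_apply, Pi.single_eq_same,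
      Pi.single_eq_of_ne hkp, smul_eq_mul, if_true, if_neg hkp]
    rw [zero_sub, mul_neg, ← neg_mul, abs_add_mul_sign hq (by linarith)]
    ring
  · rw [add_smul_transferDir_apply_of_ne hkp hkq, if_neg hkp, if_neg hkq]
    ring

lemma l1_add_smul_transferDir (hpq : p ≠ q) (hp : x p ≠ 0) (hq : x q ≠ 0)
    (htp : -|x p| ≤ t) (htq : t ≤ |x q|) :
    l1 (x + t • transferDir x p q) = l1 x := by
  simp only [l1, abs_add_smul_transferDir_apply hpq hp hq htp htq, Finset.sum_sub_distrib,
    Finset.sum_add_distrib, Finset.sum_ite_eq', Finset.mem_univ, if_true, add_sub_cancel_right]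

lemma support_add_smul_transferDir_subset (hp : x p ≠ 0) (hq : x q ≠ 0) :
    Function.support (x + t • transferDir x p q) ⊆ Function.support x := by
  intro k hk
  by_cases hkp : k = p
  · rwa [hkp]
  by_cases hkq : k = q
  · rwa [hkq]
  · rwa [Function.mem_support, add_smul_transferDir_apply_of_ne hkp hkq] at hk

lemma exists_transfer (hb : ∀ k, |x k| ≤ θ) (hpq : p ≠ q) (hp : p ∈ fracSupport θ x)
    (hq : q ∈ fracSupport θ x) :
    ∃ t > (0 : ℝ), (∀ k, |(x + t • transferDir x p q) k| ≤ θ) ∧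
      l1 (x + t • transferDir x p q) = l1 x ∧
      Function.support (x + t • transferDir x p q) ⊆ Function.support x ∧
      (fracSupport θ (x + t • transferDir x p q)).card < (fracSupport θ x).card := by
  simp only [fracSupport, Finset.mem_filter, Finset.mem_univ, true_and] at hp hq
  set t := min (θ - |x p|) |x q|
  have ht : 0 < t := lt_min (by linarith) (abs_pos.2 hq.1)
  have htp : t ≤ θ - |x p| := min_le_left _ _
  have htq : t ≤ |x q| := min_le_right _ _
  have htp' : -|x p| ≤ t := by linarith [abs_nonneg (x p)]
  have habs := abs_add_smul_transferDir_apply hpq hp.1 hq.1 htp' htq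
  refine ⟨t, ht, fun k => ?_, l1_add_smul_transferDir hpq hp.1 hq.1 htp' htq,
    support_add_smul_transferDir_subset hp.1 hq.1, Finset.card_lt_card ?_⟩
  · rw [habs]
    by_cases hkp : k = p
    · subst hkp; rw [if_pos rfl, if_neg hpq]; linarith
    by_cases hkq : k = q
    · subst hkq; rw [if_neg hkp, if_pos rfl]; linarith [hb k]
    · rw [if_neg hkp, if_neg hkq]; linarith [hb k]
  · have hsub : fracSupport θ (x + t • transferDir x p q) ⊆ fracSupport θ x := by
      intro k hk
      simp only [fracSupport, Finset.mem_filter, Finset.mem_univ, true_and] at hk ⊢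
      by_cases hkp : k = p
      · rwa [hkp]
      by_cases hkq : k = q
      · rwa [hkq]
      · rwa [add_smul_transferDir_apply_of_ne hkp hkq] at hk
    rw [Finset.ssubset_iff_of_subset hsub]
    -- the transfer either fills entry `p` up to `θ` or empties entry `q`
    rcases min_choice (θ - |x p|) |x q| with h | h
    · refine ⟨p, by simpa [fracSupport] using hp, fun hmem => ?_⟩
      have hyp : |(x + t • transferDir x p q) p| = θ := by
        rw [habs, if_pos rfl, if_neg hpq, sub_zero, show t = θ - |x p| from h]
        ring
      exact (Finset.mem_filter.1 hmem).2.2.ne hyp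
    · refine ⟨q, by simpa [fracSupport] using hq, fun hmem => ?_⟩
      have hyq : |(x + t • transferDir x p q) q| = 0 := by
        rw [habs, if_neg hpq.symm, if_pos rfl, add_zero, show t = |x q| from h, sub_self]
      exact (Finset.mem_filter.1 hmem).2.1 (abs_eq_zero.1 hyq)

end Transfer

lemma exists_mem_fracSupport_ne {n s : ℕ} {θ : ℝ} {x : Fin n → ℝ} (hb : ∀ k, |x k| ≤ θ)
    (hl1 : l1 x ≤ s * θ) (hs : s < l0 x) {a : Fin n} (ha : x a ≠ 0) :
    ∃ b ∈ fracSupport θ x, b ≠ a := by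
  by_contra! hfrac
  set S := univ.filter fun k => x k ≠ 0
  have haS : a ∈ S := Finset.mem_filter.2 ⟨Finset.mem_univ _, ha⟩
  have hsat : ∀ k ∈ S.erase a, |x k| = θ := by
    intro k hk
    obtain ⟨hka, hkS⟩ := Finset.mem_erase.1 hk
    have hk0 : x k ≠ 0 := (Finset.mem_filter.1 hkS).2
    refine le_antisymm (hb k) (not_lt.1 fun hlt => hka (hfrac k ?_))
    exact Finset.mem_filter.2 ⟨Finset.mem_univ _, hk0, hlt⟩
  have hcard : (s : ℝ) ≤ (S.erase a).card := by
    rw [Finset.card_erase_of_mem haS]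
    exact_mod_cast Nat.le_sub_one_of_lt hs
  have hθ : 0 ≤ θ := (abs_nonneg _).trans (hb a)
  have : |x a| + s * θ ≤ l1 x :=
    calc |x a| + s * θ ≤ |x a| + ∑ k ∈ S.erase a, |x k| := by
          rw [Finset.sum_congr rfl hsat, Finset.sum_const, nsmul_eq_mul]
          gcongr
      _ = ∑ k ∈ S, |x k| := Finset.add_sum_erase S (fun k => |x k|) haS
      _ ≤ l1 x := Finset.sum_le_sum_of_subset_of_nonneg (Finset.subset_univ _)
          fun k _ _ => abs_nonneg _
  linarith [abs_pos.2 ha]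

lemma exists_pair_fracSupport {n s : ℕ} {θ : ℝ} {x : Fin n → ℝ} (hb : ∀ k, |x k| ≤ θ)
    (hl1 : l1 x ≤ s * θ) (hs : s < l0 x) :
    ∃ p q, p ≠ q ∧ p ∈ fracSupport θ x ∧ q ∈ fracSupport θ x := by
  obtain ⟨a, ha⟩ := Finset.card_pos.1 (hs.trans_le' (Nat.zero_le s))
  obtain ⟨q, hq, -⟩ := exists_mem_fracSupport_ne hb hl1 hs (Finset.mem_filter.1 ha).2
  obtain ⟨p, hp, hpq⟩ := exists_mem_fracSupport_ne hb hl1 hs (Finset.mem_filter.1 hq).2.1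
  exact ⟨p, q, hpq, hp, hq⟩

def sparseAtoms {n : ℕ} (s : ℕ) (θ : ℝ) (x : Fin n → ℝ) : Set (Fin n → ℝ) :=
  {u | l0 u ≤ s ∧ Function.support u ⊆ Function.support x ∧ ∀ k, |u k| ≤ θ}

lemma sparseAtoms_mono {n s : ℕ} {θ : ℝ} {x y : Fin n → ℝ}
    (h : Function.support y ⊆ Function.support x) : sparseAtoms s θ y ⊆ sparseAtoms s θ x :=
  fun _ ⟨hl0, hsupp, hb⟩ => ⟨hl0, hsupp.trans h, hb⟩

theorem mem_convexHull_sparseAtoms {n s : ℕ} {θ : ℝ} {x : Fin n → ℝ} (hb : ∀ k, |x k| ≤ θ)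
    (hl1 : l1 x ≤ s * θ) : x ∈ convexHull ℝ (sparseAtoms s θ x) := by
  induction h : (fracSupport θ x).card using Nat.strong_induction_on generalizing x with
  | _ m ih =>
  by_cases hsp : l0 x ≤ s
  · exact subset_convexHull ℝ _ ⟨hsp, subset_rfl, hb⟩
  have transfer : ∀ {p q}, p ≠ q → p ∈ fracSupport θ x → q ∈ fracSupport θ x →
      ∃ t > (0 : ℝ), x + t • transferDir x p q ∈ convexHull ℝ (sparseAtoms s θ x) := by
    intro p q hpq hp hq
    obtain ⟨t, ht, hbt, hl1t, hsupp, hcard⟩ := exists_transfer hb hpq hp hq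
    exact ⟨t, ht, convexHull_mono (sparseAtoms_mono hsupp)
      (ih _ (h ▸ hcard) hbt (hl1t ▸ hl1) rfl)⟩
  obtain ⟨p, q, hpq, hp, hq⟩ := exists_pair_fracSupport hb hl1 (not_le.1 hsp)
  obtain ⟨t₁, ht₁, h₁⟩ := transfer hpq hp hq
  obtain ⟨t₂, ht₂, h₂⟩ := transfer hpq.symm hq hp
  rw [transferDir_swap, smul_neg, ← sub_eq_add_neg] at h₂
  exact (convex_convexHull ℝ _).mem_of_add_smul_mem_of_sub_smul_mem ht₁ ht₂ h₁ h₂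

lemma le_one_add_sqrt_two_div_two_sq_mul {s : ℝ} (hs : 1 ≤ s) :
    s ≤ (1 + √2 / 2) ^ 2 * (s - √s) + 1 := by
  have h2 : √2 ^ 2 = 2 := Real.sq_sqrt (by norm_num)
  have h2' : 1 ≤ √2 := Real.one_le_sqrt.2 (by norm_num)
  have hs' : 1 ≤ √s := Real.one_le_sqrt.2 hs
  have hss : √s ^ 2 = s := Real.sq_sqrt (by linarith)
  -- with `c = (1 + √2 / 2) ^ 2`, the difference is `(√s - 1) * ((c - 1) * √s - 1)`
  have : 0 ≤ (√s - 1) * ((1 / 2 + √2) * √s - 1) := mul_nonneg (by linarith) (by nlinarith)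
  nlinarith

theorem stmt15_general {n : ℕ} (ν : Fin n → ℝ) (θ : ℝ)
    (hinf : linf ν ≤ θ) (s : ℕ) (hs : 0 < s)
    (hl12 : l1 ν - l2 ν ≤ ((s : ℝ) - Real.sqrt s) * θ) :
    ∃ (N : ℕ) (_ : 0 < N) (lam : Fin N → ℝ) (u : Fin N → Fin n → ℝ),
      (∀ i, 0 < lam i ∧ lam i ≤ 1) ∧ (∑ i, lam i) = 1 ∧
      ν = ∑ i, lam i • u i ∧
      (∀ i, l0 (u i) ≤ s) ∧
      (∀ i, ∀ j, u i j ≠ 0 → ν j ≠ 0) ∧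
      (∀ i, linf (u i) ≤ (1 + Real.sqrt 2 / 2) * θ) ∧
      (∑ i, lam i * (l2 (u i)) ^ 2) ≤
        ((1 + Real.sqrt 2 / 2) ^ 2 * ((s : ℝ) - Real.sqrt s) + 1) * θ ^ 2 := by
  have hθ : 0 ≤ θ := (norm_nonneg ν).trans hinf
  have hb : ∀ k, |ν k| ≤ θ := fun k => (norm_le_pi_norm ν k).trans hinf
  have hs₁ : (1 : ℝ) ≤ s := by exact_mod_cast hs
  have hl1 : l1 ν ≤ s * θ := l1_le_of_l1_sub_l2_le hθ hb (by linarith) hl12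
  obtain ⟨N, hN, lam, u, hlam, hlam1, hν, hu⟩ :=
    exists_fin_convex_combination_of_mem_convexHull (mem_convexHull_sparseAtoms hb hl1)
  refine ⟨N, hN, lam, u, hlam, hlam1, hν, fun i => (hu i).1, fun i => (hu i).2.1,
    fun i => ?_, ?_⟩
  · have : linf (u i) ≤ θ := (pi_norm_le_iff_of_nonneg hθ).2 (hu i).2.2
    nlinarith [Real.sqrt_nonneg 2]
  · calc ∑ i, lam i * l2 (u i) ^ 2 ≤ ∑ i, lam i * (s * θ ^ 2) := by
          gcongr with i
          · exact (hlam i).1.le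
          · exact l2_sq_le_of_l0_le (hu i).1 (hu i).2.2
      _ = s * θ ^ 2 := by rw [← Finset.sum_mul, hlam1, one_mul]
      _ ≤ _ := by gcongr; exact le_one_add_sqrt_two_div_two_sq_mul hs₁

theorem stmt15 {n : ℕ} (ν : Fin n → ℝ) (θ : ℝ) (hθ : 0 < θ)
    (hinf : linf ν ≤ θ) (s : ℕ) (hs : 0 < s) (hssupp : s ≤ l0 ν)
    (hl12 : l1 ν - l2 ν ≤ ((s : ℝ) - Real.sqrt s) * θ) :
    ∃ (N : ℕ) (_ : 0 < N) (lam : Fin N → ℝ) (u : Fin N → Fin n → ℝ),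
      (∀ i, 0 < lam i ∧ lam i ≤ 1) ∧ (∑ i, lam i) = 1 ∧
      ν = ∑ i, lam i • u i ∧
      (∀ i, l0 (u i) ≤ s) ∧
      (∀ i, ∀ j, u i j ≠ 0 → ν j ≠ 0) ∧
      (∀ i, linf (u i) ≤ (1 + Real.sqrt 2 / 2) * θ) ∧
      (∑ i, lam i * (l2 (u i)) ^ 2) ≤
        ((1 + Real.sqrt 2 / 2) ^ 2 * ((s : ℝ) - Real.sqrt s) + 1) * θ ^ 2 :=
  stmt15_general ν θ hinf s hs hl12
end
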